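/- The abstract transition relation simulates the concrete belief transition relation: if ((l_a, B_t), (l_a', B_t')) is a transition of the belief-set game structure G_belief and B_t ⊆ γ(A_t), then there exists an abstract belief A_t' with B_t' ⊆ γ(A_t') such that ((l_a, A_t), (l_a', A_t')) is a transition of the abstract game structure α_Q(G). -/
import Mathlib


variable {La Lt : Type*}

/-- Target successor locations from agent location `la` and a set `B` of target locations. -/
def succt (T : (La × Lt) → (La × Lt) → Prop) (la : La) (B : Set Lt) : Set Lt :=
  {lt' | ∃ lt ∈ B, ∃ la', T (la, lt) (la', lt')}

/-- Agent successor locations. -/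
def succa (T : (La × Lt) → (La × Lt) → Prop) (la : La) (lt lt' : Lt) : Set La :=
  {la' | T (la, lt) (la', lt')}

/-- Abstract beliefs: a set of cells of the partition, or a single (visible) location. -/
def AbsBelief (Lt : Type*) := Set (Set Lt) ⊕ Lt

/-- Concretization of an abstract belief. -/
def gammaA : AbsBelief Lt → Set Lt
  | Sum.inl A => ⋃₀ A
  | Sum.inr l => {l}

/-- Abstraction function: cells of `Q` meeting `B`. -/
def abstr (Q : Set (Set Lt)) (B : Set Lt) : Set (Set Lt) :=
  {C | C ∈ Q ∧ (C ∩ B).Nonempty}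

def IsAbstractionPartition (Q : Set (Set Lt)) : Prop :=
  (∀ C ∈ Q, C.Nonempty) ∧
  (∀ C ∈ Q, ∀ C' ∈ Q, C ≠ C' → Disjoint C C') ∧
  ⋃₀ Q = Set.univ

/-- Transition relation of the belief-set game structure `G_belief`. -/
def BeliefTrans (T : (La × Lt) → (La × Lt) → Prop) (vis : La → Lt → Bool)
    (s s' : La × Set Lt) : Prop :=
  (∃ lt ∈ s.2, ∃ lt' ∈ s'.2, s'.1 ∈ succa T s.1 lt lt') ∧
  ((∃ lt', s'.2 = {lt'} ∧ lt' ∈ succt T s.1 s.2 ∧ vis s.1 lt' = true) ∨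
    s'.2 = {lt' ∈ succt T s.1 s.2 | vis s.1 lt' = false})

/-- Transition relation of the abstract game structure `α_Q(G)`. -/
def AbsTrans (T : (La × Lt) → (La × Lt) → Prop) (vis : La → Lt → Bool)
    (Q : Set (Set Lt)) (s s' : La × AbsBelief Lt) : Prop :=
  (∃ lt ∈ gammaA s.2, ∃ lt' ∈ gammaA s'.2, s'.1 ∈ succa T s.1 lt lt') ∧
  ((∃ lt', s'.2 = Sum.inr lt' ∧ lt' ∈ succt T s.1 (gammaA s.2) ∧ vis s.1 lt' = true) ∨
    (s'.2 = Sum.inl (abstr Q {lt' ∈ succt T s.1 (gammaA s.2) | vis s.1 lt' = false}) ∧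
      ∃ lt' ∈ succt T s.1 (gammaA s.2), vis s.1 lt' = false ∧
        ∃ lt ∈ gammaA s.2, s'.1 ∈ succa T s.1 lt lt'))

/-- The abstract transition relation simulates the concrete belief
transition relation. -/
theorem abstract_simulates_belief [Fintype La] [Fintype Lt]
    (T : (La × Lt) → (La × Lt) → Prop) (vis : La → Lt → Bool)
    (Q : Set (Set Lt)) (hQ : IsAbstractionPartition Q)
    (la la' : La) (Bt Bt' : Set Lt) (At : AbsBelief Lt)
    (hstep : BeliefTrans T vis (la, Bt) (la', Bt'))
    (hsub : Bt ⊆ gammaA At) :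
    ∃ At' : AbsBelief Lt, Bt' ⊆ gammaA At' ∧
      AbsTrans T vis Q (la, At) (la', At') := by
  obtain ⟨⟨lt, hlt, lt'', hlt'', hsucca⟩, hcase⟩ := hstep
  have hmono : succt T la Bt ⊆ succt T la (gammaA At) := by
    rintro x ⟨l, hl, la0, hT⟩
    exact ⟨l, hsub hl, la0, hT⟩
  dsimp only at hlt hlt'' hsucca hcase
  rcases hcase with ⟨lt', hBt', hsuc, hvis⟩ | hBt'
  · refine ⟨Sum.inr lt', ?_, ⟨lt, hsub hlt, lt'', ?_, hsucca⟩,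
      Or.inl ⟨lt', rfl, hmono hsuc, hvis⟩⟩
    · rw [hBt']; intro x hx; exact hx
    · rw [hBt'] at hlt''; exact hlt''
  · set Sbig := {l ∈ succt T la (gammaA At) | vis la l = false} with hS
    have hBsub : Bt' ⊆ Sbig := by
      intro x hx
      rw [hBt'] at hx
      exact ⟨hmono hx.1, hx.2⟩
    have hBsubγ : Bt' ⊆ gammaA (Sum.inl (abstr Q Sbig)) := by
      intro x hx
      have hxS := hBsub hx
      have hcover : x ∈ ⋃₀ Q := hQ.2.2 ▸ Set.mem_univ x
      obtain ⟨C, hCQ, hxC⟩ := hcover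
      exact ⟨C, ⟨hCQ, ⟨x, hxC, hxS⟩⟩, hxC⟩
    have hlt''S : lt'' ∈ Sbig := hBsub hlt''
    exact ⟨Sum.inl (abstr Q Sbig), hBsubγ,
      ⟨lt, hsub hlt, lt'', hBsubγ hlt'', hsucca⟩,
      Or.inr ⟨rfl, lt'', hlt''S.1, hlt''S.2, lt, hsub hlt, hsucca⟩⟩
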